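/- Let A be a von Neumann algebra on H. (i) For every φ ∈ PPU⁺(A): H[[t⁻¹]] ⊆ φ·H[[t⁻¹]], and there exists n ≥ 0 with φ·H[[t⁻¹]] ⊆ tⁿH[[t⁻¹]]. (ii) For every φ ∈ PPU(A) there exist integers m ≤ n with tᵐH[[t⁻¹]] ⊆ φ·H[[t⁻¹]] ⊆ tⁿH[[t⁻¹]], and φ·H[[t⁻¹]] is a closed subspace of H[[t,t⁻¹]] invariant under the actions of A' and of t⁻¹. (iii) If φ, φ' ∈ PPU(A) and φ⁻¹φ' ∈ PPU⁺(A), then φ·H[[t⁻¹]] ⊆ φ'·H[[t⁻¹]]. Hence Ω : φ ↦ φ·H[[t⁻¹]] is a well-defined monotone map. -/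

import Mathlib

noncomputable section

/-- Finite Laurent polynomials `A[t,t⁻¹]` with coefficients among the bounded operators
on `H`, with convolution product. -/
abbrev LaurentOp (H : Type*) [NormedAddCommGroup H] [InnerProductSpace ℂ H]
    [CompleteSpace H] : Type _ :=
  AddMonoidAlgebra (H →L[ℂ] H) ℤ

variable {H : Type*} [NormedAddCommGroup H] [InnerProductSpace ℂ H] [CompleteSpace H]

/-- The involution `φ* = Σ tⁱ (φ₋ᵢ)*` on `B(H)[t,t⁻¹]` (with `*` the adjoint). -/
def lstar (φ : LaurentOp H) : LaurentOp H :=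
  AddMonoidAlgebra.ofCoeff <| Finsupp.equivMapDomain (Equiv.neg ℤ) (Finsupp.mapRange star (star_zero _) φ.coeff)

/-- The specialization `ε₁(φ) = Σᵢ φᵢ`. -/
def eps1 (φ : LaurentOp H) : H →L[ℂ] H := φ.coeff.sum fun _ a => a

/-- Membership in `PPU(A)`: all coefficients of `φ` lie in the von Neumann algebra `A`,
`φ` is paraunitary (`φ*φ = φφ* = 1`), and `ε₁(φ) = 1`. -/
def InPPU (A : VonNeumannAlgebra H) (φ : LaurentOp H) : Prop :=
  (∀ i, φ.coeff i ∈ A) ∧ lstar φ * φ = 1 ∧ φ * lstar φ = 1 ∧ eps1 φ = 1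

/-- Membership in `PPU⁺(A) = PPU(A) ∩ A[t]`. -/
def InPPUplus (A : VonNeumannAlgebra H) (φ : LaurentOp H) : Prop :=
  InPPU A φ ∧ ∀ i < (0 : ℤ), φ.coeff i = 0

/-- The action of a Laurent polynomial on a two-sided sequence:
`(φx)ᵢ = Σ_k φ_k (x_{i−k})`. -/
def act (φ : LaurentOp H) (x : ℤ → H) : ℤ → H :=
  fun i => ∑ k ∈ φ.coeff.support, φ.coeff k (x (i - k))

/-- `tⁿH[[t⁻¹]]`: the square-summable sequences (i.e. elements of
`H[[t,t⁻¹]] = ℓ²(ℤ,H)`) vanishing in all degrees `> n`. -/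
def Hmn (H : Type*) [NormedAddCommGroup H] [InnerProductSpace ℂ H] [CompleteSpace H]
    (n : ℤ) : Set (ℤ → H) :=
  {x | Memℓp x 2 ∧ ∀ i > n, x i = 0}

/-- `φ·H[[t⁻¹]]`, the image of `H[[t⁻¹]] = t⁰H[[t⁻¹]]` under the action of `φ`. -/
def actH (φ : LaurentOp H) : Set (ℤ → H) := act φ '' Hmn H 0

/-- `S` is a closed linear subspace of `H[[t,t⁻¹]] = ℓ²(ℤ,H)` which is invariant under
the actions of the commutant `A'` (acting coefficientwise) and of `t⁻¹` (the shift). -/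
def IsInvClosed (A : VonNeumannAlgebra H) (S : Set (ℤ → H)) : Prop :=
  (∀ x ∈ S, Memℓp x 2) ∧
  IsClosed {y : lp (fun _ : ℤ => H) 2 | (y : ℤ → H) ∈ S} ∧
  (0 ∈ S) ∧ (∀ x ∈ S, ∀ y ∈ S, x + y ∈ S) ∧ (∀ (c : ℂ), ∀ x ∈ S, c • x ∈ S) ∧
  (∀ x ∈ S, (fun i => x (i + 1)) ∈ S) ∧
  (∀ ψ ∈ A.commutant, ∀ x ∈ S, (fun i => ψ (x i)) ∈ S)

/-- The orthogonal projection `π_M` onto a closed subspace `M`, as an operator on `H`. -/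
def projL (M : Submodule ℂ H) (hM : IsClosed (M : Set H)) : H →L[ℂ] H :=
  haveI : CompleteSpace M := hM.completeSpace_coe
  M.subtypeL.comp M.orthogonalProjectionOnto

/-- The element `p_M = tπ_M + π_{Mᗮ}` of `A[t,t⁻¹]`. -/
def pEl (M : Submodule ℂ H) (hM : IsClosed (M : Set H)) : LaurentOp H :=
  AddMonoidAlgebra.ofCoeff (Finsupp.single (1 : ℤ) (projL M hM) +
    Finsupp.single (0 : ℤ) (projL Mᗮ M.isClosed_orthogonal))

/-- The element `t = t·1` of `A[t,t⁻¹]`. -/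
def tEl (H : Type*) [NormedAddCommGroup H] [InnerProductSpace ℂ H] [CompleteSpace H] :
    LaurentOp H :=
  AddMonoidAlgebra.ofCoeff (Finsupp.single (1 : ℤ) 1)

/-- `M` is invariant under every element of the commutant `A'`. -/
def InvariantC (A : VonNeumannAlgebra H) (M : Submodule ℂ H) : Prop :=
  ∀ φ ∈ A.commutant, ∀ x ∈ M, φ x ∈ M

section Helpers

lemma act_apply (φ : LaurentOp H) (x : ℤ → H) (i : ℤ) :
    act φ x i = φ.coeff.sum fun k T => T (x (i - k)) := rfl

lemma act_single (k : ℤ) (T : H →L[ℂ] H) (x : ℤ → H) (i : ℤ) :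
    act (AddMonoidAlgebra.single k T) x i = T (x (i - k)) := by
  rw [act_apply, AddMonoidAlgebra.coeff_single, Finsupp.sum_single_index]; simp

lemma act_zero (x : ℤ → H) : act (0 : LaurentOp H) x = 0 := by
  funext i; simp [act]

lemma act_zero_right (φ : LaurentOp H) : act φ (0 : ℤ → H) = 0 := by
  funext i; simp [act]

lemma act_add (φ ψ : LaurentOp H) (x : ℤ → H) :
    act (φ + ψ) x = act φ x + act ψ x := by
  funext i
  simp only [act_apply, Pi.add_apply, AddMonoidAlgebra.coeff_add]
  exact Finsupp.sum_add_index' (by simp) (by simp)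

lemma act_add_right (φ : LaurentOp H) (x y : ℤ → H) :
    act φ (x + y) = act φ x + act φ y := by
  funext i
  simp [act, Finset.sum_add_distrib]

lemma act_one (x : ℤ → H) : act (1 : LaurentOp H) x = x := by
  funext i
  have : (1 : LaurentOp H) = AddMonoidAlgebra.single (0:ℤ) (1 : H →L[ℂ] H) := rfl
  rw [this, act_single]
  simp

lemma act_mul (φ ψ : LaurentOp H) (x : ℤ → H) : act (φ * ψ) x = act φ (act ψ x) := by
  induction φ using AddMonoidAlgebra.induction_linear with
  | zero => rw [zero_mul, act_zero, act_zero]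
  | add f g hf hg => rw [add_mul, act_add, act_add, hf, hg]
  | single a T =>
    induction ψ using AddMonoidAlgebra.induction_linear with
    | zero => rw [mul_zero, act_zero, act_zero_right]
    | add f g hf hg => rw [mul_add, act_add, hf, hg, act_add, act_add_right]
    | single b S =>
      rw [AddMonoidAlgebra.single_mul_single]
      funext i
      simp only [act_single, ContinuousLinearMap.mul_apply, sub_sub]

lemma lstar_apply (φ : LaurentOp H) (i : ℤ) : (lstar φ).coeff i = star (φ.coeff (-i)) := rfl

lemma lstar_lstar (φ : LaurentOp H) : lstar (lstar φ) = φ := by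
  ext i : 1
  rw [lstar_apply, lstar_apply]; simp

lemma lstar_single (a : ℤ) (T : H →L[ℂ] H) :
    lstar (AddMonoidAlgebra.single a T) = AddMonoidAlgebra.single (-a) (star T) := by
  ext i : 1
  rw [lstar_apply, AddMonoidAlgebra.coeff_single, AddMonoidAlgebra.coeff_single, Finsupp.single_apply, Finsupp.single_apply]
  rcases eq_or_ne (-a) i with h | h
  · rw [if_pos h, if_pos (by omega)]
  · rw [if_neg h, if_neg (by omega), star_zero]

lemma lstar_add (φ ψ : LaurentOp H) : lstar (φ + ψ) = lstar φ + lstar ψ := by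
  ext i : 1
  rw [AddMonoidAlgebra.coeff_add, Finsupp.add_apply, lstar_apply, lstar_apply, lstar_apply, AddMonoidAlgebra.coeff_add, Finsupp.add_apply, star_add]

lemma lstar_zero : lstar (0 : LaurentOp H) = 0 := by
  ext i : 1
  rw [lstar_apply]; simp

lemma lstar_mul (φ ψ : LaurentOp H) : lstar (φ * ψ) = lstar ψ * lstar φ := by
  induction φ using AddMonoidAlgebra.induction_linear with
  | zero => rw [zero_mul, lstar_zero, mul_zero]
  | add f g hf hg => rw [add_mul, lstar_add, hf, hg, lstar_add, mul_add]
  | single a T =>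
    induction ψ using AddMonoidAlgebra.induction_linear with
    | zero => rw [mul_zero, lstar_zero, zero_mul]
    | add f g hf hg => rw [mul_add, lstar_add, hf, hg, lstar_add, add_mul]
    | single b S =>
      rw [AddMonoidAlgebra.single_mul_single, lstar_single, lstar_single, lstar_single,
        AddMonoidAlgebra.single_mul_single, star_mul, neg_add, add_comm]

end Helpers
section Helpers2

lemma memℓp_comp_add {x : ℤ → H} (h : Memℓp x 2) (k : ℤ) :
    Memℓp (fun i => x (i + k)) 2 := by
  have h2 : (0:ℝ) < (2:ENNReal).toReal := by norm_num
  rw [memℓp_gen_iff h2] at h ⊢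
  exact ((Equiv.addRight k).summable_iff (f := fun j => ‖x j‖ ^ (2:ENNReal).toReal)).2 h

lemma memℓp_comp_sub {x : ℤ → H} (h : Memℓp x 2) (k : ℤ) :
    Memℓp (fun i => x (i - k)) 2 := by
  have := memℓp_comp_add h (-k)
  simpa [sub_eq_add_neg] using this

lemma memℓp_op (T : H →L[ℂ] H) {x : ℤ → H} (h : Memℓp x 2) :
    Memℓp (fun i => T (x i)) 2 := by
  have h2 : (0:ℝ) < (2:ENNReal).toReal := by norm_num
  rw [memℓp_gen_iff h2] at h ⊢
  refine Summable.of_nonneg_of_le (fun i => ?_) (fun i => ?_) (h.mul_left (‖T‖ ^ (2:ENNReal).toReal))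
  · positivity
  · calc ‖T (x i)‖ ^ (2:ENNReal).toReal ≤ (‖T‖ * ‖x i‖) ^ (2:ENNReal).toReal :=
        Real.rpow_le_rpow (norm_nonneg _) (T.le_opNorm _) (by positivity)
    _ = ‖T‖ ^ (2:ENNReal).toReal * ‖x i‖ ^ (2:ENNReal).toReal :=
        Real.mul_rpow (norm_nonneg _) (norm_nonneg _)

lemma memℓp_act (φ : LaurentOp H) {x : ℤ → H} (h : Memℓp x 2) :
    Memℓp (act φ x) 2 := by
  have : act φ x = ∑ k ∈ φ.coeff.support, (fun i => (φ.coeff k) (x (i - k))) := by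
    funext i
    rw [act, Finset.sum_apply]
  rw [this]
  classical
  refine Finset.sum_induction _ (fun f => Memℓp f 2) (fun f g hf hg => hf.add hg)
    zero_memℓp (fun k _ => memℓp_op (φ.coeff k) (memℓp_comp_sub h k))

lemma act_bound {φ : LaurentOp H} {d : ℤ} (hd : ∀ k, φ.coeff k ≠ 0 → k ≤ d) {m : ℤ}
    {x : ℤ → H} (hx : ∀ i > m, x i = 0) : ∀ i, m + d < i → act φ x i = 0 := by
  intro i hi
  rw [act]
  refine Finset.sum_eq_zero fun k hk => ?_
  have hkd := hd k (Finsupp.mem_support_iff.1 hk)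
  rw [hx (i - k) (by omega), map_zero]

lemma act_mem_Hmn {φ : LaurentOp H} {m n : ℤ} (hφ : ∀ k, φ.coeff k ≠ 0 → k ≤ n - m)
    {x : ℤ → H} (hx : x ∈ Hmn H m) : act φ x ∈ Hmn H n :=
  ⟨memℓp_act φ hx.1, fun i hi => act_bound hφ hx.2 i (by omega)⟩

lemma subset_actH {φ ψ : LaurentOp H} (h : φ * ψ = 1) {m : ℤ}
    (hψ : ∀ k, ψ.coeff k ≠ 0 → k ≤ -m) : Hmn H m ⊆ actH φ := by
  intro x hx
  refine ⟨act ψ x, act_mem_Hmn (by simpa using hψ) hx, ?_⟩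
  rw [← act_mul, h, act_one]

lemma actH_subset {φ : LaurentOp H} {n : ℤ} (hφ : ∀ k, φ.coeff k ≠ 0 → k ≤ n) :
    actH φ ⊆ Hmn H n := by
  rintro x ⟨y, hy, rfl⟩
  exact act_mem_Hmn (by simpa using hφ) hy

lemma natAbs_le_bound (φ : LaurentOp H) (k : ℤ) (hk : φ.coeff k ≠ 0) :
    k.natAbs ≤ φ.coeff.support.sup (fun j => j.natAbs) :=
  Finset.le_sup (Finsupp.mem_support_iff.2 hk)

end Helpers2
section Helpers3

lemma mem_actH_iff {φ : LaurentOp H} (h1 : lstar φ * φ = 1) (h2 : φ * lstar φ = 1)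
    {x : ℤ → H} (hx : Memℓp x 2) :
    x ∈ actH φ ↔ ∀ i > (0:ℤ), act (lstar φ) x i = 0 := by
  constructor
  · rintro ⟨y, hy, rfl⟩ i hi
    rw [← act_mul, h1, act_one]
    exact hy.2 i hi
  · intro hv
    exact ⟨act (lstar φ) x, ⟨memℓp_act _ hx, hv⟩, by rw [← act_mul, h2, act_one]⟩

lemma continuous_eval (j : ℤ) :
    Continuous fun y : lp (fun _ : ℤ => H) 2 => (y : ℤ → H) j := by
  refine (LipschitzWith.of_dist_le_mul (K := 1) fun y z => ?_).continuous
  rw [NNReal.coe_one, one_mul, dist_eq_norm, dist_eq_norm]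
  have : y j - z j = (↑(y - z) : ℤ → H) j := by
    rw [lp.coeFn_sub]; rfl
  rw [this]
  exact lp.norm_apply_le_norm (by norm_num) (y - z) j

lemma continuous_act_eval (ψ : LaurentOp H) (i : ℤ) :
    Continuous fun y : lp (fun _ : ℤ => H) 2 => act ψ (y : ℤ → H) i := by
  simp only [act]
  exact continuous_finset_sum _ fun k _ => (ψ.coeff k).continuous.comp (continuous_eval (i - k))

lemma isClosed_actH {φ : LaurentOp H} (h1 : lstar φ * φ = 1) (h2 : φ * lstar φ = 1) :
    IsClosed {y : lp (fun _ : ℤ => H) 2 | (y : ℤ → H) ∈ actH φ} := by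
  have hset : {y : lp (fun _ : ℤ => H) 2 | (y : ℤ → H) ∈ actH φ} =
      ⋂ i ∈ Set.Ioi (0:ℤ), {y : lp (fun _ : ℤ => H) 2 | act (lstar φ) (y : ℤ → H) i = 0} := by
    ext y
    simp only [Set.mem_setOf_eq, Set.mem_iInter, Set.mem_Ioi]
    exact mem_actH_iff h1 h2 (lp.memℓp y)
  rw [hset]
  exact isClosed_biInter fun i _ => isClosed_eq (continuous_act_eval _ i) continuous_const

lemma act_smul_right (φ : LaurentOp H) (c : ℂ) (x : ℤ → H) :
    act φ (c • x) = c • act φ x := by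
  funext i
  simp [act, Finset.smul_sum]

lemma act_shift (φ : LaurentOp H) (x : ℤ → H) :
    act φ (fun i => x (i + 1)) = fun i => act φ x (i + 1) := by
  funext i
  rw [act, act]
  refine Finset.sum_congr rfl fun k _ => ?_
  have h : i - k + 1 = i + 1 - k := by omega
  show φ.coeff k (x (i - k + 1)) = φ.coeff k (x (i + 1 - k))
  rw [h]

lemma act_commutant {A : VonNeumannAlgebra H} {φ : LaurentOp H} (hA : ∀ i, φ.coeff i ∈ A)
    {ψ : H →L[ℂ] H} (hψ : ψ ∈ A.commutant) (x : ℤ → H) :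
    (fun i => ψ (act φ x i)) = act φ (fun i => ψ (x i)) := by
  funext i
  rw [act, act, map_sum]
  refine Finset.sum_congr rfl fun k _ => ?_
  have h := VonNeumannAlgebra.mem_commutant_iff.1 hψ (φ.coeff k) (hA k)
  have := congrFun (congrArg (fun (T : H →L[ℂ] H) => (T : H → H)) h) (x (i - k))
  exact this.symm

end Helpers3
/--
Let `A` be a von Neumann algebra on `H`.
(i) For every `φ ∈ PPU⁺(A)`: `H[[t⁻¹]] ⊆ φ·H[[t⁻¹]]`, and there is `n ≥ 0` with
`φ·H[[t⁻¹]] ⊆ tⁿH[[t⁻¹]]`.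
(ii) For every `φ ∈ PPU(A)` there are integers `m ≤ n` with
`tᵐH[[t⁻¹]] ⊆ φ·H[[t⁻¹]] ⊆ tⁿH[[t⁻¹]]`, and `φ·H[[t⁻¹]]` is a closed subspace of
`H[[t,t⁻¹]]` invariant under the actions of `A'` and of `t⁻¹`.
(iii) If `φ, φ' ∈ PPU(A)` and `φ⁻¹φ' = φ*·φ' ∈ PPU⁺(A)`, then
`φ·H[[t⁻¹]] ⊆ φ'·H[[t⁻¹]]`.  Hence `Ω : φ ↦ φ·H[[t⁻¹]]` is well defined and monotone.
-/
theorem stmt8 (A : VonNeumannAlgebra H) :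
    -- (i)
    (∀ φ : LaurentOp H, InPPUplus A φ →
      Hmn H 0 ⊆ actH φ ∧ ∃ n : ℕ, actH φ ⊆ Hmn H (n : ℤ)) ∧
    -- (ii)
    (∀ φ : LaurentOp H, InPPU A φ →
      (∃ m n : ℤ, m ≤ n ∧ Hmn H m ⊆ actH φ ∧ actH φ ⊆ Hmn H n) ∧
      IsInvClosed A (actH φ)) ∧
    -- (iii)
    (∀ φ φ' : LaurentOp H, InPPU A φ → InPPU A φ' →
      InPPUplus A (lstar φ * φ') → actH φ ⊆ actH φ') := by
  classical
  refine ⟨?_, ?_, ?_⟩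
  · -- (i)
    intro φ hφ
    obtain ⟨⟨hA, h1, h2, _⟩, hpos⟩ := hφ
    constructor
    · refine subset_actH h2 (m := 0) fun k hk => ?_
      have hk' : φ.coeff (-k) ≠ 0 := by
        intro h0
        exact hk (by rw [lstar_apply, h0, star_zero])
      have : ¬ (-k < 0) := fun h => hk' (hpos _ h)
      omega
    · refine ⟨φ.coeff.support.sup fun j => j.natAbs, actH_subset fun k hk => ?_⟩
      have := natAbs_le_bound φ k hk
      omega
  · -- (ii)
    intro φ hφ
    obtain ⟨hA, h1, h2, _⟩ := hφ
    set N : ℕ := φ.coeff.support.sup fun j => j.natAbs with hN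
    refine ⟨⟨-(N:ℤ), (N:ℤ), by omega, ?_, ?_⟩, ?_, isClosed_actH h1 h2, ?_, ?_, ?_, ?_, ?_⟩
    · refine subset_actH h2 fun k hk => ?_
      have hk' : φ.coeff (-k) ≠ 0 := by
        intro h0
        exact hk (by rw [lstar_apply, h0, star_zero])
      have := natAbs_le_bound φ (-k) hk'
      omega
    · refine actH_subset fun k hk => ?_
      have := natAbs_le_bound φ k hk
      omega
    · rintro x ⟨y, hy, rfl⟩
      exact memℓp_act φ hy.1
    · exact ⟨0, ⟨zero_memℓp, fun i _ => rfl⟩, act_zero_right φ⟩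
    · rintro x ⟨a, ha, rfl⟩ y ⟨b, hb, rfl⟩
      exact ⟨a + b, ⟨ha.1.add hb.1,
        fun i hi => by simp [Pi.add_apply, ha.2 i hi, hb.2 i hi]⟩,
        act_add_right φ a b⟩
    · intro c x hx
      obtain ⟨a, ha, rfl⟩ := hx
      exact ⟨c • a, ⟨ha.1.const_smul c,
        fun i hi => by simp [Pi.smul_apply, ha.2 i hi]⟩,
        act_smul_right φ c a⟩
    · rintro x ⟨a, ha, rfl⟩
      exact ⟨fun i => a (i + 1), ⟨memℓp_comp_add ha.1 1,
        fun i hi => ha.2 (i + 1) (by omega)⟩, act_shift φ a⟩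
    · intro ψ hψ x hx
      obtain ⟨a, ha, rfl⟩ := hx
      exact ⟨fun i => ψ (a i), ⟨memℓp_op ψ ha.1,
        fun i hi => by show ψ (a i) = 0; rw [ha.2 i hi, map_zero]⟩,
        (act_commutant hA hψ a).symm⟩
  · -- (iii)
    intro φ φ' hφ hφ' hθ
    rintro x ⟨y, hy, rfl⟩
    refine ⟨act (lstar (lstar φ * φ')) y, act_mem_Hmn (n := 0) (m := 0) ?_ hy, ?_⟩
    · intro k hk
      have hk' : (lstar φ * φ').coeff (-k) ≠ 0 := by
        intro h0
        exact hk (by rw [lstar_apply, h0, star_zero])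
      have : ¬ (-k < 0) := fun h => hk' (hθ.2 _ h)
      omega
    · rw [← act_mul]
      have hkey : φ' * lstar (lstar φ * φ') = φ := by
        rw [lstar_mul, lstar_lstar, ← mul_assoc, hφ'.2.2.1, one_mul]
      rw [hkey]
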